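/- Let X be a real n×p matrix, y ∈ ℝⁿ, λ₂ > 0, λ a real with 0 ≤ λ ≤ λ_min(XᵀX), and Q_λ = XᵀX − λI. Define G(γ) = −γᵀQ_λγ − (1/(λ₂ + λ)) ‖Xᵀy − Q_λγ‖₂². Then G attains its maximum over ℝᵖ at γ̂ = (XᵀX + λ₂I)⁻¹Xᵀy; that is, G(γ) ≤ G(γ̂) for all γ ∈ ℝᵖ. -/

import Mathlib

open Matrix

noncomputable section

theorem XtX_isHermitian {n p : ℕ} (X : Matrix (Fin n) (Fin p) ℝ) :
    (Xᵀ * X).IsHermitian := by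
  simpa using Matrix.isHermitian_conjTranspose_mul_self X

/-- The smallest eigenvalue `λ_min(XᵀX)`. -/
def lamMin {n p : ℕ} (X : Matrix (Fin n) (Fin p) ℝ) : ℝ :=
  ⨅ i, (XtX_isHermitian X).eigenvalues i

/-- `Q_λ = XᵀX − λ I`. -/
def Qmat {n p : ℕ} (X : Matrix (Fin n) (Fin p) ℝ) (lam : ℝ) : Matrix (Fin p) (Fin p) ℝ :=
  Xᵀ * X - lam • (1 : Matrix (Fin p) (Fin p) ℝ)

-- Q is symmetric
lemma Qmat_symm {n p : ℕ} (X : Matrix (Fin n) (Fin p) ℝ) (lam : ℝ) :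
    (Qmat X lam)ᵀ = Qmat X lam := by
  have h := (XtX_isHermitian X).eq
  simp only [conjTranspose_eq_transpose_of_trivial] at h
  simp [Qmat, transpose_sub, transpose_smul, h]

-- Q posSemidef
lemma Qmat_posSemidef {n p : ℕ} (X : Matrix (Fin n) (Fin p) ℝ) (lam : ℝ)
    (hlam : lam ≤ lamMin X) : (Qmat X lam).PosSemidef := by
  have hA := XtX_isHermitian X
  have hU := (Matrix.mem_unitaryGroup_iff).mp (Matrix.IsHermitian.eigenvectorUnitary hA).2
  have key : Qmat X lam = (hA.eigenvectorUnitary : Matrix (Fin p) (Fin p) ℝ) *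
      diagonal (fun i => hA.eigenvalues i - lam) *
      (star (hA.eigenvectorUnitary : Matrix (Fin p) (Fin p) ℝ)) := by
    have hspec := hA.spectral_theorem
    rw [Qmat]
    nth_rewrite 1 [hspec]
    have : diagonal (fun i => hA.eigenvalues i - lam)
        = diagonal (RCLike.ofReal ∘ hA.eigenvalues) - lam • 1 := by
      simp [diagonal_sub, Matrix.smul_one_eq_diagonal, Function.comp]
    rw [this]
    rw [Matrix.mul_sub, Matrix.sub_mul]
    congr 1
    rw [Matrix.mul_smul, Matrix.smul_mul, mul_one, hU]
  rw [key]
  apply Matrix.PosSemidef.mul_mul_conjTranspose_same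
  · refine Matrix.posSemidef_diagonal_iff.mpr fun i => ?_
    have : lamMin X ≤ hA.eigenvalues i :=
      ciInf_le (Set.Finite.bddBelow (Set.finite_range _)) i
    linarith

/-- The ridge minimizer `γ̂ = (XᵀX + λ₂ I)⁻¹ Xᵀ y`. -/
def ridgeMin {n p : ℕ} (X : Matrix (Fin n) (Fin p) ℝ) (y : Fin n → ℝ) (lam2 : ℝ) :
    Fin p → ℝ :=
  (Xᵀ * X + lam2 • (1 : Matrix (Fin p) (Fin p) ℝ))⁻¹.mulVec (Xᵀ.mulVec y)

/-- `G(γ) = −γᵀQ_λγ − (1/(λ₂+λ))‖Xᵀy − Q_λγ‖₂²`. -/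
def Gfun {n p : ℕ} (X : Matrix (Fin n) (Fin p) ℝ) (y : Fin n → ℝ) (lam2 lam : ℝ)
    (γ : Fin p → ℝ) : ℝ :=
  -(γ ⬝ᵥ (Qmat X lam).mulVec γ)
    - (1 / (lam2 + lam)) * ∑ j, ((Xᵀ.mulVec y - (Qmat X lam).mulVec γ) j) ^ 2

-- key normal equation:  Q γ̂ + (lam2+lam) • γ̂ = Xᵀ y
lemma ridge_eq {n p : ℕ} (X : Matrix (Fin n) (Fin p) ℝ) (y : Fin n → ℝ)
    (lam2 : ℝ) (hlam2 : 0 < lam2) (lam : ℝ) :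
    (Qmat X lam).mulVec (ridgeMin X y lam2) + (lam2 + lam) • (ridgeMin X y lam2)
      = Xᵀ.mulVec y := by
  set M : Matrix (Fin p) (Fin p) ℝ := Xᵀ * X + lam2 • 1 with hM
  have hpos : M.PosDef := by
    have h1 : (Xᵀ * X).PosSemidef := by
      simpa using Matrix.posSemidef_conjTranspose_mul_self X
    have h2 : (lam2 • (1 : Matrix (Fin p) (Fin p) ℝ)).PosDef := by
      rw [Matrix.smul_one_eq_diagonal]
      exact Matrix.PosDef.diagonal fun _ => hlam2
    exact Matrix.PosDef.posSemidef_add h1 h2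
  have hMQ : (Qmat X lam) + (lam2 + lam) • (1 : Matrix (Fin p) (Fin p) ℝ) = M := by
    rw [Qmat, hM]; module
  have hinv : M * M⁻¹ = 1 := Matrix.mul_nonsing_inv M hpos.det_pos.ne'.isUnit
  have : (Qmat X lam).mulVec (ridgeMin X y lam2) + (lam2 + lam) • (ridgeMin X y lam2)
      = (Qmat X lam + (lam2 + lam) • (1 : Matrix (Fin p) (Fin p) ℝ)).mulVec
          (ridgeMin X y lam2) := by
    rw [Matrix.add_mulVec, Matrix.smul_mulVec, Matrix.one_mulVec]
  rw [this, hMQ, ridgeMin, ← hM, Matrix.mulVec_mulVec, hinv, Matrix.one_mulVec]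

lemma key_ineq {p : ℕ} (Q : Matrix (Fin p) (Fin p) ℝ) (hQ : Q.PosSemidef)
    (b u : Fin p → ℝ) (c : ℝ) (hc : 0 < c)
    (hb : Q.mulVec u + c • u = b) (γ : Fin p → ℝ) :
    -(γ ⬝ᵥ Q.mulVec γ) - (1/c) * ((b - Q.mulVec γ) ⬝ᵥ (b - Q.mulVec γ))
      ≤ -(u ⬝ᵥ Q.mulVec u) - (1/c) * ((b - Q.mulVec u) ⬝ᵥ (b - Q.mulVec u)) := by
  have hsym : ∀ v w : Fin p → ℝ, v ⬝ᵥ Q.mulVec w = w ⬝ᵥ Q.mulVec v := by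
    intro v w
    have hQt : Qᵀ = Q := by
      have h : Qᴴ = Q := hQ.1
      rwa [Matrix.conjTranspose_eq_transpose_of_trivial] at h
    rw [Matrix.dotProduct_mulVec, ← Matrix.mulVec_transpose, hQt, dotProduct_comm]
  set d : Fin p → ℝ := γ - u with hd
  have hγ : γ = u + d := by rw [hd]; abel
  have hbQγ : b - Q.mulVec γ = c • u - Q.mulVec d := by
    rw [hγ, Matrix.mulVec_add, ← hb]; abel
  have hbQu : b - Q.mulVec u = c • u := by rw [← hb]; abel
  have h1 : 0 ≤ d ⬝ᵥ Q.mulVec d := by simpa using hQ.dotProduct_mulVec_nonneg d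
  have h2 : 0 ≤ Q.mulVec d ⬝ᵥ Q.mulVec d :=
    Finset.sum_nonneg fun i _ => mul_self_nonneg _
  have h3 : 0 ≤ (1/c) * (Q.mulVec d ⬝ᵥ Q.mulVec d) :=
    mul_nonneg (by positivity) h2
  rw [hbQγ, hbQu, hγ]
  simp only [Matrix.mulVec_add, dotProduct_add, add_dotProduct, sub_dotProduct,
    dotProduct_sub, smul_dotProduct, dotProduct_smul, smul_eq_mul]
  rw [hsym d u, dotProduct_comm (Q.mulVec d) u]
  have hic2 : (1/c) * c * (u ⬝ᵥ Q.mulVec d) = u ⬝ᵥ Q.mulVec d := by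
    field_simp
  have hic3 : (1/c) * c * (c * (u ⬝ᵥ u)) = c * (u ⬝ᵥ u) := by
    field_simp
  ring_nf
  ring_nf at hic2 hic3 h3 h1
  linarith

/-- `G` attains its maximum over `ℝᵖ` at the ridge minimizer `γ̂ = (XᵀX + λ₂I)⁻¹Xᵀy`. -/
theorem stmt3 {n p : ℕ} (X : Matrix (Fin n) (Fin p) ℝ) (y : Fin n → ℝ)
    (lam2 : ℝ) (hlam2 : 0 < lam2)
    (lam : ℝ) (hlam0 : 0 ≤ lam) (hlam : lam ≤ lamMin X) :
    ∀ γ : Fin p → ℝ, Gfun X y lam2 lam γ ≤ Gfun X y lam2 lam (ridgeMin X y lam2) := by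
  intro γ
  have hc : 0 < lam2 + lam := by linarith
  have hsq : ∀ v : Fin p → ℝ, ∑ j, v j ^ 2 = v ⬝ᵥ v := by
    intro v; simp [dotProduct, sq]
  rw [Gfun, Gfun, hsq, hsq]
  exact key_ineq (Qmat X lam) (Qmat_posSemidef X lam hlam) (Xᵀ.mulVec y)
    (ridgeMin X y lam2) (lam2 + lam) hc (ridge_eq X y lam2 hlam2 lam) γ
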